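/- For the path graph A_n on n vertices, the Alexander polynomial satisfies Δ(A_n) = t^{−n/2} · Σ_{k=0}^{n} (−1)^{n−k} t^k. -/

import Mathlib

/-!
Deleting the end vertex `0` of the path on `n + 2` vertices, a leaf next to `1`, leaves paths
on `n + 1` and on `n` vertices, so the leaf recursion gives
`Δ(A_{n+2}) = (t^{1/2} - t^{-1/2}) Δ(A_{n+1}) + Δ(A_n)`. The closed form satisfies the same
recursion, because its alternating sums obey `σ_{n+1} = t^{n+1} - σ_n`, and the same initial
values. The rules do not make `f` invariant under graph isomorphism, so the induction is over
all graphs isomorphic to a path.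
-/

open scoped Classical

noncomputable section

abbrev K : Type := FractionRing (MvPolynomial Bool ℚ)

/-- The element `t^{1/2}`. -/
def S : K := algebraMap (MvPolynomial Bool ℚ) K (MvPolynomial.X false)

/-- The variable `t = (t^{1/2})²` of the Alexander polynomial. -/
def T : K := S ^ 2

/-- A rule assigning a value to every finite simple graph. -/
abbrev GraphFun : Type 1 :=
  ∀ (V : Type) [Fintype V] [DecidableEq V], SimpleGraph V → K

/-- `v` is a leaf whose unique neighbor is `w`. -/
def IsLeaf {V : Type} (G : SimpleGraph V) (v w : V) : Prop :=
  G.neighborSet v = {w}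

/-- The defining recursion of the Alexander polynomial of a forest:
value `1` on the empty graph, `t^{1/2} − t^{−1/2}` on a single vertex,
the leaf-removal recursion `Δ(Q) = (t^{1/2}−t^{−1/2})Δ(Q−v) + Δ(Q−{v,ṽ})`,
and multiplicativity over disjoint unions. -/
def AlexRules (f : GraphFun) : Prop :=
  (∀ (V : Type) [Fintype V] [DecidableEq V] (G : SimpleGraph V),
      IsEmpty V → f V G = 1) ∧
  (∀ (V : Type) [Fintype V] [DecidableEq V] (G : SimpleGraph V),
      Fintype.card V = 1 → f V G = S - S⁻¹) ∧
  (∀ (V : Type) [Fintype V] [DecidableEq V] (G : SimpleGraph V),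
      G.IsAcyclic → ∀ v w : V, IsLeaf G v w →
      f V G = (S - S⁻¹) * f ↥{x : V | x ≠ v} (G.induce {x : V | x ≠ v}) +
        f ↥{x : V | x ≠ v ∧ x ≠ w} (G.induce {x : V | x ≠ v ∧ x ≠ w})) ∧
  (∀ (V : Type) [Fintype V] [DecidableEq V] (G : SimpleGraph V),
      G.IsAcyclic → ∀ s : Set V, (∀ x ∈ s, ∀ y ∉ s, ¬ G.Adj x y) →
      f V G = f ↥s (G.induce s) * f ↥sᶜ (G.induce sᶜ))

lemma S_ne_zero : S ≠ 0 :=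
  (map_ne_zero_iff _ (IsFractionRing.injective (MvPolynomial Bool ℚ) K)).mpr
    (MvPolynomial.X_ne_zero false)

lemma sum_range_neg_one_pow_sub_mul_pow_succ {R : Type*} [CommRing R] (x : R) (n : ℕ) :
    ∑ k ∈ Finset.range (n + 2), (-1 : R) ^ (n + 1 - k) * x ^ k
      = x ^ (n + 1) - ∑ k ∈ Finset.range (n + 1), (-1 : R) ^ (n - k) * x ^ k := by
  rw [Finset.sum_range_succ, Nat.sub_self, pow_zero, one_mul, sub_eq_add_neg,
    ← Finset.sum_neg_distrib, add_comm]
  congr 1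
  refine Finset.sum_congr rfl fun k hk => ?_
  rw [Nat.sub_add_comm (Finset.mem_range_succ_iff.mp hk), pow_succ]
  ring

/-- `s` stands for `t^{1/2}`. -/
def pathAlexander {F : Type*} [Field F] (s : F) (n : ℕ) : F :=
  s⁻¹ ^ n * ∑ k ∈ Finset.range (n + 1), (-1 : F) ^ (n - k) * (s ^ 2) ^ k

section pathAlexander

variable {F : Type*} [Field F] {s : F}

lemma pathAlexander_zero : pathAlexander s 0 = 1 := by
  simp [pathAlexander]

lemma pathAlexander_one (hs : s ≠ 0) : pathAlexander s 1 = s - s⁻¹ := by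
  simp only [pathAlexander, Finset.sum_range_succ, Finset.sum_range_zero]
  field_simp
  ring

lemma pathAlexander_add_two (hs : s ≠ 0) (n : ℕ) :
    pathAlexander s (n + 2) = (s - s⁻¹) * pathAlexander s (n + 1) + pathAlexander s n := by
  simp only [pathAlexander, sum_range_neg_one_pow_sub_mul_pow_succ, inv_pow]
  field_simp
  ring

end pathAlexander

open SimpleGraph

lemma pathGraph_isAcyclic (n : ℕ) : (pathGraph n).IsAcyclic := by
  refine isAcyclic_iff_forall_adj_isBridge.mpr fun u v huv => ?_
  wlog h : u.val + 1 = v.val generalizing u v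
  · rw [Sym2.eq_swap]
    exact this v u huv.symm ((pathGraph_adj.mp huv).resolve_left h)
  rintro ⟨p⟩
  -- a walk avoiding `uv` would cross from `{i ≤ u}` to `{i > u}` through another edge
  obtain ⟨d, -, hd, hd'⟩ := p.exists_boundary_dart {i | i.val ≤ u.val} (le_refl u.val)
    (by simp only [Set.mem_ofPred_eq]; omega)
  have hadj := d.adj
  simp only [deleteEdges_adj, pathGraph_adj, Set.mem_singleton_iff] at hadj
  simp only [Set.mem_ofPred_eq, not_le] at hd hd'
  obtain ⟨hadj | hadj, hne⟩ := hadj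
  · exact hne (Sym2.eq_iff.mpr (Or.inl ⟨by ext; omega, by ext; omega⟩))
  · omega

lemma pathGraph_isLeaf_zero_one (n : ℕ) : IsLeaf (pathGraph (n + 2)) 0 1 := by
  ext i
  simp only [mem_neighborSet, pathGraph_adj, Set.mem_singleton_iff, Fin.ext_iff, Fin.val_zero,
    Fin.val_one]
  omega

lemma IsLeaf.of_iso {V W : Type} {G : SimpleGraph V} {H : SimpleGraph W} (e : G ≃g H) {v w : V}
    (h : IsLeaf H (e v) (e w)) : IsLeaf G v w := by
  ext x
  rw [← e.toEmbedding.preimage_neighborSet v, Set.mem_preimage]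
  change e x ∈ H.neighborSet (e v) ↔ _
  rw [h, Set.mem_singleton_iff, Set.mem_singleton_iff, e.injective.eq_iff]

def pathGraphDropIso (n k : ℕ) :
    (pathGraph (n + k)).induce {i | k ≤ i.val} ≃g pathGraph n where
  toFun i := ⟨i.1.val - k, by have h1 := i.1.isLt; have h2 : k ≤ i.1.val := i.2; omega⟩
  invFun j := ⟨⟨j.val + k, by omega⟩, by simp⟩
  left_inv i := Subtype.ext (Fin.ext (Nat.sub_add_cancel i.2))
  right_inv j := Fin.ext (Nat.add_sub_cancel j.val k)
  map_rel_iff' := by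
    intro a b
    have ha : k ≤ a.1.val := a.2
    have hb : k ≤ b.1.val := b.2
    simp only [Equiv.coe_fn_mk, pathGraph_adj, comap_adj, Function.Embedding.subtype_apply]
    omega

lemma eq_pathAlexander_of_iso {f : GraphFun} (hf : AlexRules f) (n : ℕ) :
    ∀ (V : Type) [Fintype V] [DecidableEq V] (G : SimpleGraph V),
      G ≃g pathGraph n → f V G = pathAlexander S n := by
  induction n using Nat.twoStepInduction with
  | zero =>
    intro V _ _ G e
    rw [hf.1 V G (Equiv.isEmpty e.toEquiv), pathAlexander_zero]
  | one =>
    intro V _ _ G e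
    rw [hf.2.1 V G (by simpa using Fintype.card_congr e.toEquiv), pathAlexander_one S_ne_zero]
  | more m ih₀ ih₁ =>
    intro V _ _ G e
    set v := e.symm 0
    set w := e.symm 1
    have he : ∀ x (i : Fin (m + 2)), x = e.symm i ↔ (e x).val = i.val := fun x i => by
      rw [← Fin.ext_iff]
      exact e.toEquiv.eq_symm_apply
    have hv : ∀ x, e x ∈ {i : Fin (m + 2) | 1 ≤ i.val} ↔ x ∈ {x | x ≠ v} := fun x => by
      simp only [Set.mem_ofPred_eq, v, ne_eq, he, Fin.val_zero]
      omega
    have hvw : ∀ x, e x ∈ {i : Fin (m + 2) | 2 ≤ i.val} ↔ x ∈ {x | x ≠ v ∧ x ≠ w} :=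
      fun x => by
        simp only [Set.mem_ofPred_eq, v, w, ne_eq, he, Fin.val_zero, Fin.val_one]
        omega
    have hleaf : IsLeaf G v w := IsLeaf.of_iso e (by simpa [v, w] using pathGraph_isLeaf_zero_one m)
    rw [hf.2.2.1 V G (e.isAcyclic_iff.mpr (pathGraph_isAcyclic _)) v w hleaf,
      ih₁ _ _ ((e.induce (e.toEquiv.bijOn hv)).trans (pathGraphDropIso (m + 1) 1)),
      ih₀ _ _ ((e.induce (e.toEquiv.bijOn hvw)).trans (pathGraphDropIso m 2)),
      pathAlexander_add_two S_ne_zero]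

/-- `Δ(A_n) = t^{−n/2} · Σ_{k=0}^{n} (−1)^{n−k} t^k` for the path on `n` vertices. -/
theorem alexander_path (f : GraphFun) (hf : AlexRules f) (n : ℕ) :
    f (Fin n) (SimpleGraph.pathGraph n) =
      (S⁻¹) ^ n * ∑ k ∈ Finset.range (n + 1), (-1 : K) ^ (n - k) * T ^ k :=
  eq_pathAlexander_of_iso hf n _ _ .refl
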